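/- The binary tree parallel reduction computes the maximum: for an array a of length 2^k, iterating the step a'(i) = max(a(i), a(i + 2^(k-1-s))) for i < 2^(k-1-s) at stage s = 0,…,k-1 leaves the maximum of the original array in position 0. -/

import Mathlib

/-! After stage `s`, position `i < 2 ^ (k - s)` holds the maximum of `a` over the indices
`i + t * 2 ^ (k - s)`, `t < 2 ^ s`. A step merges the families of `i` and `i + 2 ^ (k - s - 1)`,
which are the even and odd members of the family of `i` with the halved stride. -/

open Finset

theorem Finset.sup'_range_mul_two {α : Type*} [SemilatticeSup α] {n : ℕ} (hn : n ≠ 0)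
    (f : ℕ → α) :
    (range (n * 2)).sup' (nonempty_range_iff.mpr (mul_ne_zero hn two_ne_zero)) f =
      (range n).sup' (nonempty_range_iff.mpr hn) (fun t => f (2 * t)) ⊔
        (range n).sup' (nonempty_range_iff.mpr hn) (fun t => f (2 * t + 1)) := by
  apply le_antisymm
  · refine sup'_le _ _ fun t ht => ?_
    rw [mem_range] at ht
    obtain ⟨u, rfl | rfl⟩ := Nat.even_or_odd' t
    · exact le_sup_of_le_left (le_sup' (fun t => f (2 * t)) (mem_range.mpr (by omega)))
    · exact le_sup_of_le_right (le_sup' (fun t => f (2 * t + 1)) (mem_range.mpr (by omega)))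
  · apply sup_le <;> refine sup'_le _ _ fun t ht => le_sup' f (mem_range.mpr ?_) <;>
      rw [mem_range] at ht <;> omega

theorem tree_reduction_stage_eq_sup' {α : Type*} [LinearOrder α] (k : ℕ) (a : ℕ → α)
    (b : ℕ → ℕ → α) (h0 : ∀ i, b 0 i = a i)
    (hstep : ∀ s : ℕ, s < k → ∀ i : ℕ, i < 2^(k-1-s) →
      b (s+1) i = max (b s i) (b s (i + 2^(k-1-s)))) :
    ∀ s ≤ k, ∀ i < 2 ^ (k - s),
      b s i = (range (2 ^ s)).sup' (nonempty_range_iff.mpr (Nat.two_pow_pos s).ne')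
        (fun t => a (i + t * 2 ^ (k - s))) := by
  intro s
  induction s with
  | zero => simp [h0]
  | succ s ih =>
    intro hs i hi
    set m := 2 ^ (k - (s + 1))
    have hkm : k - 1 - s = k - (s + 1) := by omega
    have hstride : 2 ^ (k - s) = 2 * m := by
      rw [show k - s = k - (s + 1) + 1 by omega, pow_succ']
    rw [hstep s (by omega) i (by rwa [hkm]), hkm, ih (by omega) i (by omega),
      ih (by omega) (i + m) (by omega)]
    convert (sup'_range_mul_two (Nat.two_pow_pos s).ne' (fun t => a (i + t * m))).symm using 3
    · rw [hstride]; ring_nf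
    · rw [hstride]; ring_nf
    · exact pow_succ 2 s

theorem tree_reduction_correct (k : ℕ) (a : ℕ → ℝ) (b : ℕ → ℕ → ℝ)
    (h0 : ∀ i, b 0 i = a i)
    (hstep : ∀ s : ℕ, s < k → ∀ i : ℕ, i < 2^(k-1-s) →
      b (s+1) i = max (b s i) (b s (i + 2^(k-1-s)))) :
    b k 0 = (Finset.range (2^k)).sup' (Finset.nonempty_range_iff.mpr (Nat.two_pow_pos k).ne') a := by
  simpa using tree_reduction_stage_eq_sup' k a b h0 hstep k le_rfl 0 (by simp)
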